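/- Let X, Y be comodular cocircuits of an oriented matroid (i.e., z(X) and z(Y) form a modular pair in the underlying matroid) and let e ∈ sep(X,Y). Then cocircuit elimination of e between X and Y yields a unique cocircuit Z with supp(Z) ⊆ supp(X ∘ Y) \ {e}; moreover Z_f = (X ∘ Y)_f for all f ∉ sep(X,Y). -/

import Mathlib

open Set

variable {E : Type*}

/-- Support of a sign vector. -/
def supp (X : E → SignType) : Set E := {e | X e ≠ 0}

/-- Zero set of a sign vector. -/
def zset (X : E → SignType) : Set E := {e | X e = 0}

/-- Composition of sign vectors: first nonzero entry wins. -/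
def scomp (X Y : E → SignType) : E → SignType := fun e => if X e ≠ 0 then X e else Y e

/-- Separation set of two sign vectors. -/
def ssep (X Y : E → SignType) : Set E := {e | X e ≠ 0 ∧ X e = -Y e}

/-- `G` covers `F` in the lattice of flats of `M`. -/
def Matroid.FlatCovBy (M : Matroid E) (F G : Set E) : Prop :=
  M.IsFlat F ∧ M.IsFlat G ∧ F ⊂ G ∧ ∀ F', M.IsFlat F' → F ⊆ F' → F' ⊆ G → F' = F ∨ F' = G

/-- A hyperplane: a flat covered by the ground set (corank 1 flat). -/
def Matroid.IsHyperplane (M : Matroid E) (H : Set E) : Prop := M.FlatCovBy H M.E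

/-- A coline: a flat of corank 2. -/
def Matroid.IsColine (M : Matroid E) (F : Set E) : Prop :=
  ∃ H, M.FlatCovBy F H ∧ M.IsHyperplane H

/-- A coplane: a flat of corank 3. -/
def Matroid.IsCoplane (M : Matroid E) (F : Set E) : Prop :=
  ∃ G, M.FlatCovBy F G ∧ M.IsColine G

/-- An oriented matroid, given by its set of cocircuits (sign vectors satisfying the
cocircuit axioms), bundled with its underlying matroid, whose hyperplanes are exactly
the zero sets of the cocircuits. -/
structure OM (E : Type*) where
  M : Matroid E
  ground_eq : M.E = Set.univ
  cocircuits : Set (E → SignType)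
  zero_not_mem : (0 : E → SignType) ∉ cocircuits
  neg_mem : ∀ X ∈ cocircuits, -X ∈ cocircuits
  supp_incomp : ∀ X ∈ cocircuits, ∀ Y ∈ cocircuits, supp X ⊆ supp Y → X = Y ∨ X = -Y
  elim_ax : ∀ X ∈ cocircuits, ∀ Y ∈ cocircuits, X ≠ -Y → ∀ e ∈ ssep X Y,
      ∃ Z ∈ cocircuits, Z e = 0 ∧ ∀ f, Z f = X f ∨ Z f = Y f ∨ Z f = 0
  hyperplane_iff : ∀ H : Set E, M.IsHyperplane H ↔ ∃ X ∈ cocircuits, zset X = H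

/-- Covectors: the zero vector together with compositions of cocircuits. -/
def OM.IsCovector (O : OM E) (X : E → SignType) : Prop :=
  X = 0 ∨ ∃ L : List (E → SignType), L ≠ [] ∧ (∀ Y ∈ L, Y ∈ O.cocircuits) ∧ X = L.foldr scomp 0

/-- An edge: a covector whose zero set is a coline of the underlying matroid. -/
def OM.IsEdge (O : OM E) (F : E → SignType) : Prop := O.IsCovector F ∧ O.M.IsColine (zset F)

/-- Two cocircuits are comodular iff their composition is an edge, i.e. its zero set
is a coline. -/
def OM.Comod (O : OM E) (X Y : E → SignType) : Prop := O.M.IsColine (zset (scomp X Y))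

def OM.IsLoopE (O : OM E) (e : E) : Prop := ¬ O.M.Indep {e}

def OM.IsColoopE (O : OM E) (e : E) : Prop := ∀ B, O.M.IsBase B → e ∈ B

/-- `Z` is the result of cocircuit elimination of `g` between `-X` and `Y`:
a cocircuit vanishing at `g` with support inside `supp((-X) ∘ Y) \ {g}`. -/
def OM.ElimWit (O : OM E) (g : E) (X Y Z : E → SignType) : Prop :=
  Z ∈ O.cocircuits ∧ Z g = 0 ∧ supp Z ⊆ supp (scomp (-X) Y) \ {g}

/-- The direction of the pair `(X,Y)` in the program `(O,g,f)` is `s`: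
eliminating `g` between `-X` and `Y` yields `Z` with `Z f = s`. -/
def OM.DirIs (O : OM E) (g f : E) (X Y : E → SignType) (s : SignType) : Prop :=
  ∃ Z, O.ElimWit g X Y Z ∧ Z f = s

/-! ### Auxiliary lemmas -/

lemma sB : ∀ s : SignType, s = -s → s = 0 := by decide
lemma sD : ∀ s : SignType, -s = 0 → s = 0 := by decide
lemma sN : ∀ s t : SignType, -s = -t → s = t := by decide
lemma sC : ∀ s t : SignType, s ≠ 0 → t ≠ 0 → ¬ s = -t → s = t := by decide

lemma scomp_eq_zero {X Y : E → SignType} {f : E} :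
    scomp X Y f = 0 ↔ X f = 0 ∧ Y f = 0 := by
  simp only [scomp]
  by_cases h : X f = 0 <;> simp [h]

lemma flat_closure (M : Matroid E) (X : Set E) : M.IsFlat (M.closure X) := by
  rw [Matroid.closure_def]
  have h : Nonempty {F : Set E // M.IsFlat F ∧ X ∩ M.E ⊆ F} :=
    ⟨⟨M.E, M.ground_isFlat, inter_subset_right⟩⟩
  have h2 := Matroid.IsFlat.iInter (M := M)
      (Fs := fun F : {F : Set E // M.IsFlat F ∧ X ∩ M.E ⊆ F} => F.1) (fun F => F.2.1)
  convert h2 using 1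
  rw [sInter_eq_iInter]
  rfl

lemma flat_inter {M : Matroid E} {F G : Set E} (hF : M.IsFlat F) (hG : M.IsFlat G) :
    M.IsFlat (F ∩ G) := by
  rw [inter_eq_iInter]
  exact Matroid.IsFlat.iInter (fun b => by cases b <;> simpa)

lemma covby_closure_insert {M : Matroid E} (hE : M.E = univ) {F : Set E} (hF : M.IsFlat F)
    {x : E} (hx : x ∉ F) : M.FlatCovBy F (M.closure (insert x F)) := by
  have hxE : (insert x F : Set E) ⊆ M.E := by rw [hE]; exact subset_univ _
  have hFsub : F ⊆ M.closure (insert x F) :=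
    (subset_insert x F).trans (M.subset_closure _ hxE)
  have hxmem : x ∈ M.closure (insert x F) := M.subset_closure _ hxE (mem_insert x F)
  refine ⟨hF, flat_closure M _, hFsub.ssubset_of_ne (fun h => hx (h ▸ hxmem)), ?_⟩
  intro F' hF' hFF' hF'G
  by_cases hne : F' = F
  · exact Or.inl hne
  right
  obtain ⟨y, hyF', hyF⟩ : ∃ y, y ∈ F' ∧ y ∉ F := by
    by_contra h
    push_neg at h
    exact hne (antisymm h hFF')
  have hyG : y ∈ M.closure (insert x F) := hF'G hyF'
  have hynotcl : y ∉ M.closure F := by rw [hF.closure]; exact hyF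
  have hxcl : x ∈ M.closure (insert y F) := Matroid.mem_closure_insert hynotcl hyG
  have hsub2 : M.closure (insert y F) ⊆ F' := by
    have h1 : insert y F ⊆ F' := insert_subset hyF' hFF'
    calc M.closure (insert y F) ⊆ M.closure F' := M.closure_subset_closure h1
      _ = F' := hF'.closure
  have hsub3 : M.closure (insert x F) ⊆ F' := by
    have h1 : insert x F ⊆ F' := insert_subset (hsub2 hxcl) hFF'
    calc M.closure (insert x F) ⊆ M.closure F' := M.closure_subset_closure h1
      _ = F' := hF'.closure
  exact hF'G.antisymm hsub3

lemma coline_ne_hyperplane {M : Matroid E} {F : Set E} (h1 : M.IsColine F)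
    (h2 : M.IsHyperplane F) : False := by
  obtain ⟨H0, hFH0, hH0⟩ := h1
  rcases h2.2.2.2 H0 hFH0.2.1 hFH0.2.2.1.subset hH0.2.2.1.subset with h | h
  · exact hFH0.2.2.1.ne h.symm
  · exact hH0.2.2.1.ne h

lemma coline_covby_hyperplane {M : Matroid E} (hE : M.E = univ) {F H : Set E}
    (hF : M.IsColine F) (hH : M.IsHyperplane H) (hFH : F ⊆ H) : M.FlatCovBy F H := by
  obtain ⟨H0, hFH0, hH0⟩ := hF
  have hFne : F ≠ H := by
    rintro rfl
    exact coline_ne_hyperplane ⟨H0, hFH0, hH0⟩ hH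
  refine ⟨hFH0.1, hH.1, hFH.ssubset_of_ne hFne, ?_⟩
  intro F' hF' hFF' hF'H
  by_cases hne : F' = F
  · exact Or.inl hne
  right
  obtain ⟨x, hxF', hxF⟩ : ∃ x, x ∈ F' ∧ x ∉ F := by
    by_contra h
    push_neg at h
    exact hne (antisymm h hFF')
  have hF'ne : F' ≠ M.E := by
    intro h
    apply hH.2.2.1.ne
    exact hH.2.2.1.subset.antisymm (h ▸ hF'H)
  rcases hFH0.2.2.2 (F' ∩ H0) (flat_inter hF' hFH0.2.1)
      (subset_inter hFF' hFH0.2.2.1.subset) inter_subset_right with hKF | hKH0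
  · have hxH0 : x ∉ H0 := fun h => hxF (by rw [← hKF]; exact ⟨hxF', h⟩)
    have hcov := covby_closure_insert hE hFH0.2.1 hxH0
    have hclE : M.closure (insert x H0) = M.E := by
      rcases hH0.2.2.2 _ hcov.2.1 hcov.2.2.1.subset (M.closure_subset_ground _) with h | h
      · exfalso
        have hxmem : x ∈ M.closure (insert x H0) :=
          M.subset_closure _ (by rw [hE]; exact subset_univ _) (mem_insert x H0)
        rw [h] at hxmem
        exact hxH0 hxmem
      · exact h
    obtain ⟨y, hyH0, hyF⟩ : ∃ y, y ∈ H0 ∧ y ∉ F := exists_of_ssubset hFH0.2.2.1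
    have hclyF : M.closure (insert y F) = H0 := by
      have hcov2 := covby_closure_insert hE hFH0.1 hyF
      have hsub : M.closure (insert y F) ⊆ H0 := by
        have h1 : insert y F ⊆ H0 := insert_subset hyH0 hFH0.2.2.1.subset
        calc M.closure (insert y F) ⊆ M.closure H0 := M.closure_subset_closure h1
          _ = H0 := hFH0.2.1.closure
      rcases hFH0.2.2.2 _ hcov2.2.1 hcov2.2.2.1.subset hsub with h | h
      · exfalso
        have hymem : y ∈ M.closure (insert y F) :=
          M.subset_closure _ (by rw [hE]; exact subset_univ _) (mem_insert y F)
        rw [h] at hymem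
        exact hyF hymem
      · exact h
    set G := M.closure (insert x F) with hGdef
    have hGF' : G ⊆ F' := by
      have h1 : insert x F ⊆ F' := insert_subset hxF' hFF'
      calc M.closure (insert x F) ⊆ M.closure F' := M.closure_subset_closure h1
        _ = F' := hF'.closure
    have hyG : y ∉ G := by
      intro h
      exact hyF (by rw [← hKF]; exact ⟨hGF' h, hyH0⟩)
    have hcov3 := covby_closure_insert hE (flat_closure M (insert x F)) hyG
    have hG' : M.closure (insert y G) = M.E := by
      rw [hGdef, Matroid.closure_insert_closure_eq_closure_insert, insert_comm,
        ← Matroid.closure_insert_closure_eq_closure_insert, hclyF, hclE]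
    rw [hG'] at hcov3
    rcases hcov3.2.2.2 F' hF' hGF' (by rw [hE]; exact subset_univ _) with h1 | h1
    · rcases hcov3.2.2.2 H hH.1 (h1 ▸ hF'H) (by rw [hE]; exact subset_univ _) with h2 | h2
      · exact h1.trans h2.symm
      · exact absurd h2 hH.2.2.1.ne
    · exact absurd h1 hF'ne
  · have hH0F' : H0 ⊆ F' := by rw [← hKH0]; exact inter_subset_left
    rcases hH0.2.2.2 F' hF' hH0F' (by rw [hE]; exact subset_univ _) with h | h
    · rcases hH0.2.2.2 H hH.1 (h ▸ hF'H) (by rw [hE]; exact subset_univ _) with h2 | h2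
      · exact h.trans h2.symm
      · exact absurd h2 hH.2.2.1.ne
    · exact absurd h hF'ne

lemma hyperplane_unique {M : Matroid E} (hE : M.E = univ) {F H1 H2 : Set E}
    (hF : M.IsColine F) (h1 : M.IsHyperplane H1) (h2 : M.IsHyperplane H2)
    (hF1 : F ⊆ H1) (hF2 : F ⊆ H2) {x : E} (hx1 : x ∈ H1) (hx2 : x ∈ H2) (hxF : x ∉ F) :
    H1 = H2 := by
  have key : ∀ A B : Set E, M.FlatCovBy F A → M.FlatCovBy F B → x ∈ A → x ∈ B → A ⊆ B := by
    intro A B hA hB hxA hxB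
    rcases hA.2.2.2 (A ∩ B) (flat_inter hA.2.1 hB.2.1)
        (subset_inter hA.2.2.1.subset hB.2.2.1.subset) inter_subset_left with h | h
    · exfalso
      apply hxF
      rw [← h]
      exact ⟨hxA, hxB⟩
    · intro y hy
      have hmem : y ∈ A ∩ B := by rw [h]; exact hy
      exact hmem.2
  exact (key H1 H2 (coline_covby_hyperplane hE hF h1 hF1) (coline_covby_hyperplane hE hF h2 hF2)
      hx1 hx2).antisymm
    (key H2 H1 (coline_covby_hyperplane hE hF h2 hF2) (coline_covby_hyperplane hE hF h1 hF1)
      hx2 hx1)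

lemma OM.eq_or_neg (O : OM E) {Z W : E → SignType} (hZ : Z ∈ O.cocircuits)
    (hW : W ∈ O.cocircuits) (h : zset Z = zset W) : Z = W ∨ Z = -W := by
  refine O.supp_incomp Z hZ W hW ?_
  intro g hg h0
  apply hg
  have h1 : g ∈ zset W := h0
  rw [← h] at h1
  exact h1

lemma OM.core (O : OM E) {X Y Z : E → SignType} (hX : X ∈ O.cocircuits)
    (hY : Y ∈ O.cocircuits) (hZ : Z ∈ O.cocircuits)
    (hcm : O.M.IsColine (zset (scomp X Y))) {e : E} (he : e ∈ ssep X Y) (hZe : Z e = 0)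
    (hsgn : ∀ f, Z f = X f ∨ Z f = Y f ∨ Z f = 0) :
    ∀ f, f ∉ ssep X Y → Z f = scomp X Y f := by
  have hE := O.ground_eq
  have hXe : X e ≠ 0 := he.1
  have hXYe : X e = -Y e := he.2
  have hYe : Y e ≠ 0 := fun h0 => hXe (by rw [hXYe, h0]; decide)
  have hFZ : zset (scomp X Y) ⊆ zset Z := by
    intro g hg
    obtain ⟨h1, h2⟩ := scomp_eq_zero.1 hg
    rcases hsgn g with h | h | h
    · exact h.trans h1
    · exact h.trans h2
    · exact h
  have hFX : zset (scomp X Y) ⊆ zset X := fun g hg => (scomp_eq_zero.1 hg).1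
  have hFY : zset (scomp X Y) ⊆ zset Y := fun g hg => (scomp_eq_zero.1 hg).2
  have hZhyp : O.M.IsHyperplane (zset Z) := (O.hyperplane_iff _).2 ⟨Z, hZ, rfl⟩
  have hXhyp : O.M.IsHyperplane (zset X) := (O.hyperplane_iff _).2 ⟨X, hX, rfl⟩
  have hYhyp : O.M.IsHyperplane (zset Y) := (O.hyperplane_iff _).2 ⟨Y, hY, rfl⟩
  have hcovZ := coline_covby_hyperplane hE hcm hZhyp hFZ
  have hinter : ∀ (V : E → SignType), V ∈ O.cocircuits → O.M.IsHyperplane (zset V) →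
      zset (scomp X Y) ⊆ zset V → V e ≠ 0 →
      zset Z ∩ zset V = zset (scomp X Y) := by
    intro V hVc hVhyp hFV hVe
    rcases hcovZ.2.2.2 (zset Z ∩ zset V) (flat_inter hcovZ.2.1 hVhyp.1)
        (subset_inter hFZ hFV) inter_subset_left with h | h
    · exact h
    · exfalso
      have hsub : zset Z ⊆ zset V := by rw [← h]; exact inter_subset_right
      rcases O.supp_incomp V hVc Z hZ (fun g hg h0 => hg (hsub h0)) with h1 | h1
      · exact hVe (by rw [h1]; exact hZe)
      · exact hVe (by rw [h1]; show -(Z e) = 0; rw [hZe]; decide)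
  have interX := hinter X hX hXhyp hFX hXe
  have interY := hinter Y hY hYhyp hFY hYe
  intro f hf
  by_cases hXf : X f = 0
  · by_cases hYf : Y f = 0
    · have h0 : scomp X Y f = 0 := scomp_eq_zero.2 ⟨hXf, hYf⟩
      rw [h0]
      exact hFZ h0
    · have hsc : scomp X Y f = Y f := by simp [scomp, hXf]
      rw [hsc]
      have hZf : Z f ≠ 0 := by
        intro h0
        apply hYf
        apply hFY
        rw [← interX]
        exact ⟨h0, hXf⟩
      rcases hsgn f with h | h | h
      · exact absurd (h.trans hXf) hZf
      · exact h
      · exact absurd h hZf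
  · have hsc : scomp X Y f = X f := by simp [scomp, hXf]
    rw [hsc]
    by_cases hYf : Y f = 0
    · have hZf : Z f ≠ 0 := by
        intro h0
        apply hXf
        apply hFX
        rw [← interY]
        exact ⟨h0, hYf⟩
      rcases hsgn f with h | h | h
      · exact h
      · exact absurd (h.trans hYf) hZf
      · exact absurd h hZf
    · have hXYf : X f = Y f := sC _ _ hXf hYf (fun hc => hf ⟨hXf, hc⟩)
      rcases hsgn f with h | h | h
      · exact h
      · exact h.trans hXYf.symm
      · exfalso
        have hXY' : X ≠ Y := by
          intro hxy
          rw [hxy] at hXYe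
          exact hYe (sB _ hXYe)
        have hfsep : f ∈ ssep X (-Y) := by
          refine ⟨hXf, ?_⟩
          show X f = -((-Y) f)
          rw [Pi.neg_apply, neg_neg]
          exact hXYf
        have hXnnY : X ≠ -(-Y) := by rw [neg_neg]; exact hXY'
        obtain ⟨W, hW, hWf, hWsgn⟩ := O.elim_ax X hX (-Y) (O.neg_mem Y hY) hXnnY f hfsep
        have hFW : zset (scomp X Y) ⊆ zset W := by
          intro g hg
          obtain ⟨h1g, h2g⟩ := scomp_eq_zero.1 hg
          rcases hWsgn g with h' | h' | h'
          · exact h'.trans h1g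
          · show W g = 0
            rw [h']
            show -(Y g) = 0
            rw [h2g]
            decide
          · exact h'
        have hWhyp : O.M.IsHyperplane (zset W) := (O.hyperplane_iff _).2 ⟨W, hW, rfl⟩
        have hfF : f ∉ zset (scomp X Y) := fun hh => hXf (scomp_eq_zero.1 hh).1
        have hzWZ : zset W = zset Z :=
          hyperplane_unique hE hcm hWhyp hZhyp hFW hFZ hWf h hfF
        rcases O.eq_or_neg hW hZ hzWZ with hWZ | hWZ
        · have hsupp : supp Z ⊆ supp X := by
            intro g hg
            rcases hsgn g with h1 | h1 | h1
            · intro h0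
              exact hg (h1.trans h0)
            · rcases hWsgn g with h2 | h2 | h2 <;> rw [hWZ] at h2
              · intro h0
                exact hg (h2.trans h0)
              · exfalso
                apply hg
                have h3 : Z g = -(Z g) := by
                  nth_rewrite 2 [h1]
                  rw [h2]
                  rfl
                exact sB _ h3
              · exact absurd h2 hg
            · exact absurd h1 hg
          rcases O.supp_incomp Z hZ X hX hsupp with h1 | h1
          · exact hXe (by rw [← h1]; exact hZe)
          · apply hXe
            have h2 := hZe
            rw [h1] at h2
            exact sD _ h2
        · have hsupp : supp Z ⊆ supp Y := by
            intro g hg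
            rcases hsgn g with h1 | h1 | h1
            · rcases hWsgn g with h2 | h2 | h2 <;> rw [hWZ] at h2
              · exact absurd (sB _ (h1.trans h2.symm)) hg
              · intro h0
                apply hg
                have h3 : Z g = Y g := sN _ _ h2
                rw [h3, h0]
              · exact absurd (sD _ h2) hg
            · intro h0
              exact hg (h1.trans h0)
            · exact absurd h1 hg
          rcases O.supp_incomp Z hZ Y hY hsupp with h1 | h1
          · exact hYe (by rw [← h1]; exact hZe)
          · apply hYe
            have h2 := hZe
            rw [h1] at h2
            exact sD _ h2


/-- unique cocircuit elimination between comodular cocircuits; moreover the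
eliminated cocircuit agrees with `X ∘ Y` outside the separation set. -/
theorem unique_cocircuit_elim (O : OM E) (X Y : E → SignType)
    (hX : X ∈ O.cocircuits) (hY : Y ∈ O.cocircuits) (hcm : O.Comod X Y)
    (e : E) (he : e ∈ ssep X Y) :
    ∃ Z, (Z ∈ O.cocircuits ∧ Z e = 0 ∧ (∀ f, Z f = X f ∨ Z f = Y f ∨ Z f = 0) ∧
        supp Z ⊆ supp (scomp X Y) \ {e}) ∧
      (∀ Z', (Z' ∈ O.cocircuits ∧ Z' e = 0 ∧ (∀ f, Z' f = X f ∨ Z' f = Y f ∨ Z' f = 0) ∧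
        supp Z' ⊆ supp (scomp X Y) \ {e}) → Z' = Z) ∧
      (∀ f, f ∉ ssep X Y → Z f = scomp X Y f) := by
  have hE := O.ground_eq
  have hXe : X e ≠ 0 := he.1
  have hXYe : X e = -Y e := he.2
  have hYe : Y e ≠ 0 := fun h0 => hXe (by rw [hXYe, h0]; decide)
  have hcm' : O.M.IsColine (zset (scomp X Y)) := hcm
  have hXnY : X ≠ -Y := by
    intro hxy
    have hzeq : zset (scomp X Y) = zset X := by
      ext g
      constructor
      · exact fun hg => (scomp_eq_zero.1 hg).1
      · intro hg
        refine scomp_eq_zero.2 ⟨hg, ?_⟩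
        have h2 : X g = -(Y g) := by rw [hxy]; rfl
        exact sD _ (h2.symm.trans hg)
    rw [hzeq] at hcm'
    exact coline_ne_hyperplane hcm' ((O.hyperplane_iff _).2 ⟨X, hX, rfl⟩)
  obtain ⟨Z, hZ, hZe, hZsgn⟩ := O.elim_ax X hX Y hY hXnY e he
  have hsuppgen : ∀ V : E → SignType, V e = 0 → (∀ f, V f = X f ∨ V f = Y f ∨ V f = 0) →
      supp V ⊆ supp (scomp X Y) \ {e} := by
    intro V hVe hVsgn g hg
    refine ⟨?_, ?_⟩
    · intro h0
      obtain ⟨h1, h2⟩ := scomp_eq_zero.1 h0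
      rcases hVsgn g with h | h | h
      · exact hg (h.trans h1)
      · exact hg (h.trans h2)
      · exact hg h
    · simp only [mem_singleton_iff]
      intro hge
      rw [hge] at hg
      exact hg hVe
  have hFgen : ∀ V : E → SignType, (∀ f, V f = X f ∨ V f = Y f ∨ V f = 0) →
      zset (scomp X Y) ⊆ zset V := by
    intro V hV g hg
    obtain ⟨h1, h2⟩ := scomp_eq_zero.1 hg
    rcases hV g with h | h | h
    · exact h.trans h1
    · exact h.trans h2
    · exact h
  have part3 := O.core hX hY hZ hcm' he hZe hZsgn
  refine ⟨Z, ⟨hZ, hZe, hZsgn, hsuppgen Z hZe hZsgn⟩, ?_, part3⟩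
  rintro Z' ⟨hZ'c, hZ'e, hZ'sgn, -⟩
  have heF : e ∉ zset (scomp X Y) := fun hh => hXe (scomp_eq_zero.1 hh).1
  have hzeq : zset Z' = zset Z :=
    hyperplane_unique hE hcm' ((O.hyperplane_iff _).2 ⟨Z', hZ'c, rfl⟩)
      ((O.hyperplane_iff _).2 ⟨Z, hZ, rfl⟩) (hFgen Z' hZ'sgn) (hFgen Z hZsgn) hZ'e hZe heF
  rcases O.eq_or_neg hZ'c hZ hzeq with h | h
  · exact h
  · exfalso
    have part3' := O.core hX hY hZ'c hcm' he hZ'e hZ'sgn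
    apply hXnY
    funext g
    by_cases hg : g ∈ ssep X Y
    · exact hg.2
    · have h1 := part3 g hg
      have h2 := part3' g hg
      rw [h] at h2
      have h3 : Z g = -(Z g) := h1.trans h2.symm
      have h4 : Z g = 0 := sB _ h3
      have h5 : scomp X Y g = 0 := h1.symm.trans h4
      obtain ⟨h6, h7⟩ := scomp_eq_zero.1 h5
      show X g = -(Y g)
      rw [h6, h7]
      decide
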